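/- If (s,C) ∈ WinM_i for some i, then there exists a positional (memoryless-in-state) choice function ω on the set {s' | ∃ j ≤ i, (s',C) ∈ WinM_j} such that: for every state s' with minimal index j > 0, for all x ∈ X, (δ(s', ω(s'), x), C) ∈ WinM_{j-1}. Consequently, every play following ω from s reaches a state in Base within i steps. -/

import Mathlib

def PreMC {S Φ X Y : Type*} (δ : S → Y → X → S) (E : Set (S × Set Φ)) :
    Set (S × Set Φ) :=
  {p | ∃ y : Y, ∀ x : X, (δ p.1 y x, p.2) ∈ E}

def WinM {S Φ X Y : Type*} (δ : S → Y → X → S) (Base : Set (S × Set Φ)) :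
    ℕ → Set (S × Set Φ)
  | 0 => Base
  | i + 1 => WinM δ Base i ∪ PreMC δ (WinM δ Base i)

/-- Play following a positional (state-based) choice function. -/
def playPos {S X Y : Type*} (δ : S → Y → X → S) (ω : S → Y) (ξ : ℕ → X)
    (s : S) : ℕ → S
  | 0 => s
  | t + 1 => δ (playPos δ ω ξ s t) (ω (playPos δ ω ξ s t)) (ξ t)

theorem positional_strategy_exists
    {S Φ X Y : Type*} [Fintype S] [Fintype Φ] [Fintype X] [Fintype Y] [Nonempty Y]
    (δ : S → Y → X → S) (Base : Set (S × Set Φ))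
    (s : S) (C : Set Φ) (i : ℕ) (hs : (s, C) ∈ WinM δ Base i) :
    ∃ ω : S → Y,
      (∀ (s' : S) (j : ℕ), 0 < j → (s', C) ∈ WinM δ Base j →
        (∀ j' < j, (s', C) ∉ WinM δ Base j') →
        ∀ x : X, (δ s' (ω s') x, C) ∈ WinM δ Base (j - 1)) ∧
      (∀ ξ : ℕ → X, ∃ k ≤ i, (playPos δ ω ξ s k, C) ∈ Base) := by
  classical
  -- monotonicity
  have mono : ∀ {a b : ℕ}, a ≤ b → WinM δ Base a ⊆ WinM δ Base b := by
    intro a b hab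
    induction hab with
    | refl => exact subset_rfl
    | step h ih => exact ih.trans Set.subset_union_left
  -- minimal index
  let m : S → ℕ := fun s' =>
    if hex : ∃ j, (s', C) ∈ WinM δ Base j then Nat.find hex else 0
  -- the strategy
  let ω : S → Y := fun s' =>
    if h : ∃ y : Y, ∀ x : X, (δ s' y x, C) ∈ WinM δ Base (m s' - 1) then
      Classical.choose h else Classical.arbitrary Y
  -- key: if s' has minimal index j > 0 then ω works
  have key : ∀ (s' : S) (j : ℕ), 0 < j → (s', C) ∈ WinM δ Base j →
      ((s', C) ∉ WinM δ Base (j - 1)) →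
      ∀ x : X, (δ s' (ω s') x, C) ∈ WinM δ Base (j - 1) := by
    intro s' j hj0 hmem hnot
    have hex : ∃ j, (s', C) ∈ WinM δ Base j := ⟨j, hmem⟩
    have hm : m s' = j := by
      simp only [m, dif_pos hex]
      refine le_antisymm (Nat.find_le hmem) ?_
      by_contra h
      push_neg at h
      exact hnot (mono (Nat.le_sub_one_of_lt h) (Nat.find_spec hex))
    obtain ⟨j', rfl⟩ : ∃ j', j = j' + 1 := ⟨j - 1, (Nat.succ_pred_eq_of_pos hj0).symm⟩
    have hpre : (s', C) ∈ PreMC δ (WinM δ Base j') := by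
      rcases hmem with h | h
      · exact absurd h (by simpa using hnot)
      · exact h
    obtain ⟨y, hy⟩ := hpre
    have hEx : ∃ y : Y, ∀ x : X, (δ s' y x, C) ∈ WinM δ Base (m s' - 1) := by
      rw [hm]; exact ⟨y, hy⟩
    intro x
    have hspec := Classical.choose_spec hEx x
    have hω : ω s' = Classical.choose hEx := dif_pos hEx
    rw [hω, ← hm]
    exact hspec
  refine ⟨ω, ?_, ?_⟩
  · intro s' j hj0 hmem hmin x
    exact key s' j hj0 hmem (hmin (j - 1) (Nat.sub_lt hj0 one_pos)) x
  · -- reach Base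
    have shift : ∀ (ξ : ℕ → X) (s₀ : S) (k : ℕ),
        playPos δ ω (fun n => ξ (n + 1)) (playPos δ ω ξ s₀ 1) k
          = playPos δ ω ξ s₀ (k + 1) := by
      intro ξ s₀ k
      induction k with
      | zero => rfl
      | succ k ih =>
          have ih' : playPos δ ω (fun n => ξ (n + 1)) (δ s₀ (ω s₀) (ξ 0)) k
              = playPos δ ω ξ s₀ (k + 1) := ih
          simp only [playPos, ih']
    have main : ∀ (i : ℕ) (s₀ : S), (s₀, C) ∈ WinM δ Base i →
        ∀ ξ : ℕ → X, ∃ k ≤ i, (playPos δ ω ξ s₀ k, C) ∈ Base := by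
      intro i
      induction i with
      | zero => intro s₀ h ξ; exact ⟨0, le_refl 0, h⟩
      | succ i ih =>
        intro s₀ h ξ
        by_cases h' : (s₀, C) ∈ WinM δ Base i
        · obtain ⟨k, hk, hb⟩ := ih s₀ h' ξ
          exact ⟨k, hk.trans (Nat.le_succ i), hb⟩
        · have hstep := key s₀ (i + 1) (Nat.succ_pos i) h (by simpa using h')
          have h1 : (playPos δ ω ξ s₀ 1, C) ∈ WinM δ Base i := by
            simpa [playPos] using hstep (ξ 0)
          obtain ⟨k, hk, hb⟩ := ih _ h1 (fun n => ξ (n + 1))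
          refine ⟨k + 1, Nat.succ_le_succ hk, ?_⟩
          rw [← shift ξ s₀ k]; exact hb
    exact main i s hs
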